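/- Let R be a commutative ring, N ⊆ R a nilpotent ideal, f ∈ R, and n ∈ N². Let S be the localization of R away from f. Then f + n maps to a unit of S, and the two R-submodules of S given by Σ_{k≥0} N^{2k}·f^{−k} (the submodule generated by all elements x·f^{−k} with x ∈ N^{2k}, k ≥ 0) and Σ_{k≥0} N^{2k}·(f+n)^{−k} coincide. (The sheaf of rings 𝒜_D = 𝒪_S + 𝒩²(D) + 𝒩⁴(2D) + … depends only on the reduced divisor, not on the chosen even extension of its local equation.) -/

import Mathlib

/-!
If `h = g + m` is a unit with `m ∈ N²` and `N` nilpotent, then `a = m h⁻¹` is nilpotent and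
`g⁻¹ = h⁻¹ (1 - a)⁻¹` with `(1 - a)⁻¹ = ∑ aⁱ` a finite sum. Since `x ∈ N^{2k}` gives
`x aʲ h^{-k} ∈ N^{2(k+j)} h^{-(k+j)}`, each term `x g^{-k}` of `Σ N^{2k} g^{-k}` lies in
`Σ N^{2k} h^{-k}`. Applying this with `(g, h) = (f, f + n)` and `(f + n, f)` gives both inclusions.
-/

open Finset

theorem Ideal.isNilpotent_of_mem {R : Type*} [CommRing R] {N : Ideal R} (hN : IsNilpotent N)
    {x : R} (hx : x ∈ N) : IsNilpotent x := by
  obtain ⟨t, ht⟩ := hN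
  exact ⟨t, by simpa [ht] using Ideal.pow_mem_pow hx t⟩

section StableUnderMul

variable {R S : Type*} [CommRing R] [CommRing S] [Algebra R S] {M : Submodule R S} {a : S}

theorem Submodule.pow_mul_mem_of_forall_mul_mem (hM : ∀ s ∈ M, a * s ∈ M) (i : ℕ) {s : S}
    (hs : s ∈ M) : a ^ i * s ∈ M := by
  induction i with
  | zero => simpa using hs
  | succ i ih => simpa only [pow_succ', mul_assoc] using hM _ ih

theorem Submodule.mul_mem_of_one_sub_mul_eq_one (ha : IsNilpotent a) {b : S}
    (hb : (1 - a) * b = 1) (hM : ∀ s ∈ M, a * s ∈ M) {s : S} (hs : s ∈ M) : b * s ∈ M := by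
  obtain ⟨t, ht⟩ := ha
  have hgeom : (1 - a) * ∑ i ∈ range t, a ^ i = 1 := by rw [mul_neg_geom_sum, ht, sub_zero]
  have hb_eq : b = ∑ i ∈ range t, a ^ i := by
    linear_combination (∑ i ∈ range t, a ^ i) * hb - b * hgeom
  rw [hb_eq, Finset.sum_mul]
  exact Submodule.sum_mem _ fun i _ => pow_mul_mem_of_forall_mul_mem hM i hs

end StableUnderMul

namespace Ideal

variable {R S : Type*} [CommRing R] [CommRing S] [Algebra R S]

/-- The `R`-submodule `Σ_{k ≥ 0} N^{2k} g^{-k}` of `S`, written without inverting `g`. -/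
def evenPowSpan (N : Ideal R) (g : S) : Submodule R S :=
  Submodule.span R {s : S | ∃ (k : ℕ) (x : R), x ∈ N ^ (2 * k) ∧ s * g ^ k = algebraMap R S x}

variable {N : Ideal R} {h h' : S}

theorem algebraMap_mul_pow_mem_evenPowSpan (hh' : h * h' = 1) {k : ℕ} {x : R}
    (hx : x ∈ N ^ (2 * k)) : algebraMap R S x * h' ^ k ∈ evenPowSpan N h :=
  Submodule.subset_span ⟨k, x, hx, by rw [mul_assoc, ← mul_pow, mul_comm h', hh', one_pow, mul_one]⟩

theorem eq_algebraMap_mul_pow_of_mul_pow_eq (hh' : h * h' = 1) {s : S} {k : ℕ} {x : R}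
    (hs : s * h ^ k = algebraMap R S x) : s = algebraMap R S x * h' ^ k := by
  rw [← hs, mul_assoc, ← mul_pow, hh', one_pow, mul_one]

theorem mul_mem_evenPowSpan (hh' : h * h' = 1) {m : R} (hm : m ∈ N ^ 2) {s : S}
    (hs : s ∈ evenPowSpan N h) : algebraMap R S m * h' * s ∈ evenPowSpan N h := by
  suffices evenPowSpan N h ≤
      (evenPowSpan N h).comap (LinearMap.mulLeft R (algebraMap R S m * h')) from this hs
  refine Submodule.span_le.mpr ?_
  rintro s ⟨k, x, hx, hsx⟩
  have hxm : x * m ∈ N ^ (2 * (k + 1)) := by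
    rw [mul_add, mul_one, pow_add]
    exact Ideal.mul_mem_mul hx hm
  change algebraMap R S m * h' * s ∈ evenPowSpan N h
  convert algebraMap_mul_pow_mem_evenPowSpan hh' hxm using 1
  rw [eq_algebraMap_mul_pow_of_mul_pow_eq hh' hsx, map_mul]
  ring

theorem evenPowSpan_le_of_eq_add (hN : IsNilpotent N) {g : S} (hh' : h * h' = 1) {m : R}
    (hm : m ∈ N ^ 2) (hgh : h = g + algebraMap R S m) : evenPowSpan N g ≤ evenPowSpan N h := by
  set a := algebraMap R S m * h'
  have ha : IsNilpotent a :=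
    Commute.isNilpotent_mul_right (Commute.all _ _)
      ((isNilpotent_of_mem hN (pow_le_self two_ne_zero hm)).map (algebraMap R S))
  obtain ⟨b, hb⟩ := ha.isUnit_one_sub.exists_right_inv
  have hg : g * (h' * b) = 1 := by
    rw [← hb]
    linear_combination b * hh' - (h' * b) * hgh
  refine Submodule.span_le.mpr ?_
  rintro s ⟨k, x, hx, hsx⟩
  have hs : s = b ^ k * (algebraMap R S x * h' ^ k) := by
    rw [eq_algebraMap_mul_pow_of_mul_pow_eq hg hsx]
    ring
  rw [hs]
  refine Submodule.pow_mul_mem_of_forall_mul_mem (fun t ht => ?_) k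
    (algebraMap_mul_pow_mem_evenPowSpan hh' hx)
  exact Submodule.mul_mem_of_one_sub_mul_eq_one ha hb (fun _ => mul_mem_evenPowSpan hh' hm) ht

end Ideal

theorem stmt_16 {R : Type*} [CommRing R] (N : Ideal R) (hN : IsNilpotent N)
    (f : R) (n : R) (hn : n ∈ N ^ 2) :
    IsUnit (algebraMap R (Localization.Away f) (f + n)) ∧
    Submodule.span R {s : Localization.Away f | ∃ (k : ℕ) (x : R), x ∈ N ^ (2 * k) ∧
        s * (algebraMap R (Localization.Away f) f) ^ k =
          algebraMap R (Localization.Away f) x} =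
      Submodule.span R {s : Localization.Away f | ∃ (k : ℕ) (x : R), x ∈ N ^ (2 * k) ∧
        s * (algebraMap R (Localization.Away f) (f + n)) ^ k =
          algebraMap R (Localization.Away f) x} := by
  set S := Localization.Away f
  have hf : IsUnit (algebraMap R S f) := IsLocalization.Away.algebraMap_isUnit f
  have hn_nil : IsNilpotent (algebraMap R S n) :=
    (N.isNilpotent_of_mem hN (Ideal.pow_le_self two_ne_zero hn)).map _
  have hfn : IsUnit (algebraMap R S (f + n)) := by
    rw [map_add]
    exact hn_nil.isUnit_add_left_of_commute hf (Commute.all _ _)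
  obtain ⟨f', hf'⟩ := hf.exists_right_inv
  obtain ⟨g', hg'⟩ := hfn.exists_right_inv
  refine ⟨hfn, le_antisymm ?_ ?_⟩
  · exact Ideal.evenPowSpan_le_of_eq_add hN hg' hn (map_add _ _ _)
  · exact Ideal.evenPowSpan_le_of_eq_add hN hf' (neg_mem hn) (by simp)
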